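/- arXiv:math/0108134 — 3 statements merged into one kernel-verified Lean document; each statement's English description precedes it below -/
import Mathlib

section
/- Let H : ℝⁿ → ℝ be a C¹ function defined on the open unit ball Dⁿ = {p : |p| < 1} with compact support in Dⁿ, and suppose H(0) > c for some c > 0. Then the image of the gradient map p ↦ ∇H(p) contains the closed Euclidean ball of radius c centered at the origin. -/
/-! For `‖v‖ ≤ c` the function `p ↦ H p - ⟪v, p⟫` is larger at `0` than anywhere on the unit
sphere, where `H` vanishes; so it has a local maximum inside the ball, and there `∇H = v`. -/

open Metric

theorem Metric.exists_isLocalMax_mem_ball {α β : Type*} [PseudoMetricSpace α] [ProperSpace α]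
    [TopologicalSpace β] [ConditionallyCompleteLinearOrder β] [OrderTopology β]
    {f : α → β} {a z : α} {r : ℝ} (hf : ContinuousOn f (closedBall a r))
    (hz : z ∈ closedBall a r) (hf1 : ∀ z' ∈ sphere a r, f z' < f z) :
    ∃ z ∈ ball a r, IsLocalMax f z := by
  simp_rw [← closedBall_sdiff_ball] at hf1
  exact (isCompact_closedBall a r).exists_isLocalMax_mem_open ball_subset_closedBall hf hz hf1
    isOpen_ball

theorem gradient_eq_of_isLocalMax_sub_inner {E : Type*} [NormedAddCommGroup E]
    [InnerProductSpace ℝ E] [CompleteSpace E] {f : E → ℝ} {v p : E}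
    (hf : DifferentiableAt ℝ f p) (hmax : IsLocalMax (fun x ↦ f x - inner ℝ v x) p) :
    gradient f p = v := by
  have hderiv : fderiv ℝ f p = InnerProductSpace.toDual ℝ E v :=
    sub_eq_zero.mp <| hmax.hasFDerivAt_eq_zero <| hf.hasFDerivAt.sub (innerSL ℝ v).hasFDerivAt
  rw [gradient, hderiv, LinearIsometryEquiv.symm_apply_apply]

theorem apply_eq_zero_of_tsupport_subset_ball {α β : Type*} [PseudoMetricSpace α] [Zero β]
    {f : α → β} {a y : α} {r : ℝ} (hsupp : tsupport f ⊆ ball a r) (hy : y ∈ sphere a r) :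
    f y = 0 :=
  image_eq_zero_of_notMem_tsupport fun hmem ↦
    (mem_sphere.mp hy).not_lt (mem_ball.mp (hsupp hmem))

theorem stmt0_general {n : ℕ} (H : EuclideanSpace ℝ (Fin n) → ℝ) (c : ℝ)
    (hH : ContDiff ℝ 1 H)
    (hsupp' : tsupport H ⊆ ball (0 : EuclideanSpace ℝ (Fin n)) 1)
    (h0 : c < H 0) :
    ∀ v : EuclideanSpace ℝ (Fin n), ‖v‖ ≤ c →
      ∃ p : EuclideanSpace ℝ (Fin n), ‖p‖ < 1 ∧ gradient H p = v := by
  intro v hv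
  have hsphere : ∀ y ∈ sphere (0 : EuclideanSpace ℝ (Fin n)) 1,
      H y - inner ℝ v y < H 0 - inner ℝ v 0 := by
    intro y hy
    have hy1 : ‖y‖ = 1 := mem_sphere_zero_iff_norm.mp hy
    calc H y - inner ℝ v y = inner ℝ v (-y) := by
          rw [apply_eq_zero_of_tsupport_subset_ball hsupp' hy, inner_neg_right, zero_sub]
      _ ≤ ‖v‖ * ‖-y‖ := real_inner_le_norm v (-y)
      _ ≤ c := by rw [norm_neg, hy1, mul_one]; exact hv
      _ < H 0 - inner ℝ v 0 := by rw [inner_zero_right, sub_zero]; exact h0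
  obtain ⟨p, hp, hmax⟩ := exists_isLocalMax_mem_ball
    (hH.continuous.sub (innerSL ℝ v).continuous).continuousOn
    (mem_closedBall_self zero_le_one) hsphere
  exact ⟨p, mem_ball_zero_iff.mp hp,
    gradient_eq_of_isLocalMax_sub_inner (hH.differentiable one_ne_zero p) hmax⟩

theorem stmt0 {n : ℕ} (H : EuclideanSpace ℝ (Fin n) → ℝ) (c : ℝ)
    (hH : ContDiff ℝ 1 H) (hsupp : HasCompactSupport H)
    (hsupp' : tsupport H ⊆ ball (0 : EuclideanSpace ℝ (Fin n)) 1)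
    (hc : 0 < c) (h0 : c < H 0) :
    ∀ v : EuclideanSpace ℝ (Fin n), ‖v‖ ≤ c →
      ∃ p : EuclideanSpace ℝ (Fin n), ‖p‖ < 1 ∧ gradient H p = v :=
  stmt0_general H c hH hsupp' h0
end

section
/- Let f : X → X be a continuous map of a compact metric space, u : X → ℝⁿ continuous, and suppose for a fixed y ∈ X there is a sequence of points x_k ∈ X and a vector v ∈ ℝⁿ with lim_{k→∞} (1/k) Σ_{i=0}^{k-1} u(f^i(x_k)) = v. Then there exists an f-invariant Borel probability measure μ on X with ∫ u dμ = v. -/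
/-!
The empirical measures `μ_k = (1/k) Σ_{i<k} δ_{f^i(x_k)}` are probability measures with
`∫ u dμ_k → v`. Since `X` is compact, so is the space of Borel probability measures on `X` with
the weak-* topology; let `μ` be a cluster point of `(μ_k)`. Integration against a bounded
continuous function is weak-* continuous, so `∫ u dμ = v`. For continuous `g`, telescoping gives
`∫ (g ∘ f - g) dμ_k = (g(f^k x_k) - g(x_k)) / k → 0`, hence `∫ g ∘ f dμ = ∫ g dμ`, i.e. `f`
preserves `μ`.
-/

open MeasureTheory Filter Topology
open scoped ENNReal BoundedContinuousFunction

theorem MapClusterPt.eq_of_tendsto {α X : Type*} [TopologicalSpace X] [T2Space X] {l : Filter α}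
    {u : α → X} {x y : X} (hx : MapClusterPt x l u) (hy : Tendsto u l (𝓝 y)) : x = y :=
  eq_of_nhds_neBot <| hx.neBot.mono <| inf_le_inf_left _ hy

namespace MeasureTheory

section Empirical

variable {X : Type*} [MeasurableSpace X]

noncomputable def empiricalMeasure (f : X → X) (k : ℕ) (x : X) : Measure X :=
  (k : ℝ≥0∞)⁻¹ • ∑ i ∈ Finset.range k, Measure.dirac (f^[i] x)

theorem isProbabilityMeasure_empiricalMeasure (f : X → X) {k : ℕ} (hk : k ≠ 0) (x : X) :
    IsProbabilityMeasure (empiricalMeasure f k x) := by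
  constructor
  simp [empiricalMeasure,
    ENNReal.inv_mul_cancel (Nat.cast_ne_zero.2 hk) (ENNReal.natCast_ne_top k)]

variable [MeasurableSingletonClass X] {E : Type*} [NormedAddCommGroup E] [NormedSpace ℝ E]
    [CompleteSpace E]

theorem integral_empiricalMeasure (f : X → X) (k : ℕ) (x : X) (g : X → E) :
    ∫ z, g z ∂empiricalMeasure f k x = (k : ℝ)⁻¹ • ∑ i ∈ Finset.range k, g (f^[i] x) := by
  rw [empiricalMeasure, integral_smul_measure,
    integral_finsetSum_measure fun i _ => integrable_dirac enorm_lt_top]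
  simp [integral_dirac]

theorem integral_comp_sub_empiricalMeasure (f : X → X) (k : ℕ) (x : X) (g : X → E) :
    ∫ z, (g (f z) - g z) ∂empiricalMeasure f k x = (k : ℝ)⁻¹ • (g (f^[k] x) - g x) := by
  simp only [integral_empiricalMeasure, ← Function.iterate_succ_apply' f,
    Finset.sum_range_sub fun i => g (f^[i] x), Function.iterate_zero_apply]

theorem tendsto_integral_comp_sub_empiricalMeasure [TopologicalSpace X] (f : X → X)
    (x : ℕ → X) (g : X →ᵇ E) :
    Tendsto (fun k => ∫ z, (g (f z) - g z) ∂empiricalMeasure f k (x k)) atTop (𝓝 0) := by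
  simp only [integral_comp_sub_empiricalMeasure]
  refine squeeze_zero_norm (fun k => ?_)
    (by simpa using tendsto_inv_atTop_nhds_zero_nat.mul_const (2 * ‖g‖))
  rw [norm_smul, norm_inv, Real.norm_natCast, ← dist_eq_norm]
  exact mul_le_mul_of_nonneg_left (g.dist_le_two_norm _ _) (by positivity)

end Empirical

namespace ProbabilityMeasure

variable {X : Type*} [TopologicalSpace X] [MeasurableSpace X]
  {E : Type*} [NormedAddCommGroup E] [NormedSpace ℝ E] [FiniteDimensional ℝ E]

theorem continuous_integral_of_finiteDimensional [OpensMeasurableSpace X] (g : X →ᵇ E) :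
    Continuous fun μ : ProbabilityMeasure X => ∫ x, g x ∂μ := by
  let e := (Module.finBasis ℝ E).equivFunL
  let coord (i : Fin (Module.finrank ℝ E)) : E →L[ℝ] ℝ :=
    ContinuousLinearMap.proj i ∘L (e : E →L[ℝ] Fin (Module.finrank ℝ E) → ℝ)
  have key : ∀ μ : ProbabilityMeasure X,
      ∫ x, g x ∂μ = e.symm fun i => ∫ x, coord i (g x) ∂μ := fun μ => by
    borelize E
    rw [e.eq_symm_apply, ← e.integral_comp_comm]
    funext i
    exact eval_integral (fun i => ((coord i).integrable_comp (g.integrable μ))) i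
  simp_rw [key]
  exact e.symm.continuous.comp <| _root_.continuous_pi fun i =>
    continuous_integral_boundedContinuousFunction (g.comp _ (coord i).lipschitz)

theorem integral_eq_of_mapClusterPt [OpensMeasurableSpace X] {ι : Type*} {l : Filter ι}
    {ν : ι → ProbabilityMeasure X} {μ : ProbabilityMeasure X} (hμ : MapClusterPt μ l ν)
    (g : X →ᵇ E) {v : E}
    (hv : Tendsto (fun i => ∫ x, g x ∂ν i) l (𝓝 v)) :
    ∫ x, g x ∂μ = v :=
  (hμ.tendsto_comp ((continuous_integral_of_finiteDimensional g).tendsto μ)).eq_of_tendsto hv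

theorem map_eq_of_mapClusterPt [HasOuterApproxClosed X] [BorelSpace X] {f : X → X}
    (hf : Continuous f) {ι : Type*} {l : Filter ι} {ν : ι → ProbabilityMeasure X}
    {μ : ProbabilityMeasure X} (hμ : MapClusterPt μ l ν)
    (hν : ∀ g : X →ᵇ ℝ,
      Tendsto (fun i => ∫ x, (g (f x) - g x) ∂ν i) l (𝓝 0)) :
    (μ : Measure X).map f = μ := by
  have := Measure.isProbabilityMeasure_map (μ := (μ : Measure X)) hf.aemeasurable
  refine ext_of_forall_integral_eq_of_IsFiniteMeasure fun g => ?_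
  let gf : X →ᵇ ℝ := g.compContinuous ⟨f, hf⟩
  have h : ∫ x, (gf x - g x) ∂μ = 0 := integral_eq_of_mapClusterPt hμ (gf - g) (hν g)
  rw [integral_sub (gf.integrable μ) (g.integrable μ), sub_eq_zero] at h
  rwa [integral_map hf.aemeasurable g.continuous.aestronglyMeasurable]

end ProbabilityMeasure

end MeasureTheory

theorem stmt4_general {n : ℕ} {X : Type} [MetricSpace X] [CompactSpace X]
    [MeasurableSpace X] [BorelSpace X]
    (f : X → X) (hf : Continuous f)
    (u : X → EuclideanSpace ℝ (Fin n)) (hu : Continuous u)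
    (x : ℕ → X) (v : EuclideanSpace ℝ (Fin n))
    (hlim : Tendsto (fun k : ℕ => (k : ℝ)⁻¹ • ∑ i ∈ Finset.range k, u (f^[i] (x k)))
      atTop (nhds v)) :
    ∃ μ : Measure X, IsProbabilityMeasure μ ∧ Measure.map f μ = μ ∧ ∫ z, u z ∂μ = v := by
  -- shifted by one, since `empiricalMeasure f 0 _ = 0`
  let ν (k : ℕ) : ProbabilityMeasure X :=
    ⟨empiricalMeasure f (k + 1) (x (k + 1)),
      isProbabilityMeasure_empiricalMeasure f k.succ_ne_zero _⟩
  obtain ⟨μ, -, hμ⟩ := isCompact_univ.exists_mapClusterPt (f := atTop) (u := ν) (by simp)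
  refine ⟨μ, inferInstance, ?_, ?_⟩
  · exact ProbabilityMeasure.map_eq_of_mapClusterPt hf hμ fun g =>
      (tendsto_integral_comp_sub_empiricalMeasure f x g).comp (tendsto_add_atTop_nat 1)
  · refine ProbabilityMeasure.integral_eq_of_mapClusterPt hμ
      (BoundedContinuousFunction.mkOfCompact ⟨u, hu⟩) ?_
    simpa [ν, integral_empiricalMeasure] using (tendsto_add_atTop_iff_nat 1).2 hlim

/-- If the Cesàro averages of `u` along orbits of points `x k` converge to `v`, then
there is an `f`-invariant Borel probability measure `μ` with `∫ u dμ = v`. -/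
theorem stmt4 {n : ℕ} {X : Type} [MetricSpace X] [CompactSpace X]
    [MeasurableSpace X] [BorelSpace X]
    (f : X → X) (hf : Continuous f)
    (u : X → EuclideanSpace ℝ (Fin n)) (hu : Continuous u)
    (y : X) (x : ℕ → X) (v : EuclideanSpace ℝ (Fin n))
    (hlim : Tendsto (fun k : ℕ => (k : ℝ)⁻¹ • ∑ i ∈ Finset.range k, u (f^[i] (x k)))
      atTop (nhds v)) :
    ∃ μ : Measure X, IsProbabilityMeasure μ ∧ Measure.map f μ = μ ∧ ∫ z, u z ∂μ = v :=
  stmt4_general f hf u hu x v hlim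
end

section
/- Let H : (-1,1) → ℝ be smooth with support in (-1/2, 1/2), let γ = max_p |H'(p)|, let u : [-1,1] → [-1,1] be an orientation-preserving diffeomorphism with u(s) > s for -3/4 < s < 3/4 and u(s) = s for |s| ≥ 3/4, and let N ∈ ℕ satisfy u^N(-2/3) > 2/3. Define f̃ : ℝ × (-1,1) → ℝ × (-1,1) by f̃(q, p) = (q + H'(p), u(p)). Then for every (q₀, p₀) ∈ ℝ × (-1,1) and every i ∈ ℤ the orbit (q_i, p_i) = f̃^i(q₀, p₀) satisfies |q_i − q₀| ≤ (N+1)γ. -/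
/-- The lift to the universal cover `ℝ × (-1,1)` of the perturbed map `f = φ ∘ h`,
`f̃(q,p) = (q + H'(p), u(p))`, as a permutation of `ℝ × ℝ`. -/
noncomputable def dissipMap (H : ℝ → ℝ) (u : ℝ ≃ ℝ) : Equiv.Perm (ℝ × ℝ) where
  toFun x := (x.1 + deriv H x.2, u x.2)
  invFun x := (x.1 - deriv H (u.symm x.2), u.symm x.2)
  left_inv := by
    rintro ⟨q, p⟩
    simp
  right_inv := by
    rintro ⟨q, p⟩
    simp

/-- Counting lemma: if nonzero terms of `g` are confined to a window of length `N+1`,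
the sum of any initial segment is bounded by `(N+1)γ`. -/
lemma dissip_sumBound (g : ℕ → ℝ) (γ : ℝ) (hγ0 : 0 ≤ γ) (hbd : ∀ j, |g j| ≤ γ)
    (N : ℕ) (hkey : ∀ j k, j + N ≤ k → g j ≠ 0 → g k = 0) (n : ℕ) :
    |∑ j ∈ Finset.range n, g j| ≤ ((N : ℝ) + 1) * γ := by
  classical
  set S := (Finset.range n).filter (fun j => g j ≠ 0) with hS
  have h1 : |∑ j ∈ Finset.range n, g j| ≤ ∑ j ∈ S, |g j| := by
    calc |∑ j ∈ Finset.range n, g j| ≤ ∑ j ∈ Finset.range n, |g j| :=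
          Finset.abs_sum_le_sum_abs _ _
      _ = ∑ j ∈ S, |g j| := by
          refine (Finset.sum_filter_of_ne ?_).symm
          intro j _ h
          exact fun h0 => h (by rw [h0, abs_zero])
  rcases S.eq_empty_or_nonempty with hSe | hne
  · rw [hSe] at h1
    simp only [Finset.sum_empty] at h1
    refine h1.trans ?_
    positivity
  · set j₀ := S.min' hne with hj₀
    have hsub : S ⊆ Finset.Icc j₀ (j₀ + N) := by
      intro k hk
      rw [Finset.mem_Icc]
      refine ⟨S.min'_le k hk, ?_⟩
      by_contra hcon
      push_neg at hcon
      have hgj₀ : g j₀ ≠ 0 := (Finset.mem_filter.mp (S.min'_mem hne)).2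
      have hgk : g k ≠ 0 := (Finset.mem_filter.mp hk).2
      exact hgk (hkey j₀ k (by omega) hgj₀)
    have hcard : (S.card : ℝ) ≤ (N : ℝ) + 1 := by
      have := Finset.card_le_card hsub
      rw [Nat.card_Icc] at this
      exact_mod_cast this.trans (by omega)
    have h2 : ∑ j ∈ S, |g j| ≤ (S.card : ℝ) * γ := by
      calc ∑ j ∈ S, |g j| ≤ ∑ _j ∈ S, γ := Finset.sum_le_sum (fun j _ => hbd j)
        _ = (S.card : ℝ) * γ := by rw [Finset.sum_const, nsmul_eq_mul]
    exact h1.trans (h2.trans (mul_le_mul_of_nonneg_right hcard hγ0))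

/-- Dissipative counterexample to propagation: all orbits of `f̃` stay a bounded distance
(at most `(N+1)γ`) from their starting point in the `q`-direction. -/
theorem stmt13 (H : ℝ → ℝ) (hH : ContDiff ℝ (⊤ : ℕ∞) H)
    (hsupp : Function.support H ⊆ Set.Ioo (-(1 : ℝ)/2) (1/2))
    (γ : ℝ) (hγ : ∀ p : ℝ, |deriv H p| ≤ γ)
    (u : ℝ ≃ ℝ) (humono : StrictMono u)
    (hu1 : ∀ s : ℝ, -(3 : ℝ)/4 < s → s < 3/4 → s < u s)
    (hu2 : ∀ s : ℝ, 3/4 ≤ |s| → u s = s)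
    (N : ℕ) (hN : (2 : ℝ)/3 < (⇑u)^[N] (-(2 : ℝ)/3)) :
    ∀ q₀ p₀ : ℝ, p₀ ∈ Set.Ioo (-(1 : ℝ)) 1 → ∀ i : ℤ,
      |((dissipMap H u ^ i) (q₀, p₀)).1 - q₀| ≤ ((N : ℝ) + 1) * γ := by
  -- basic facts
  have hγ0 : 0 ≤ γ := le_trans (abs_nonneg _) (hγ 0)
  -- the derivative vanishes away from the support
  have hD : ∀ p : ℝ, (1 : ℝ)/2 < |p| → deriv H p = 0 := by
    intro p hp
    have hopen : IsOpen {x : ℝ | (1 : ℝ)/2 < |x|} :=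
      isOpen_lt continuous_const continuous_abs
    have hev : H =ᶠ[nhds p] (fun _ => (0 : ℝ)) := by
      filter_upwards [hopen.mem_nhds hp] with x hx
      by_contra h
      have hmem := hsupp (Function.mem_support.mpr h)
      rw [Set.mem_Ioo] at hmem
      have : |x| < 1/2 := abs_lt.mpr ⟨by linarith [hmem.1], hmem.2⟩
      have hx' : (1:ℝ)/2 < |x| := hx
      linarith
    calc deriv H p = deriv (fun _ => (0 : ℝ)) p := hev.deriv_eq
      _ = 0 := deriv_const p 0
  -- u moves points up
  have hle : ∀ s : ℝ, s ≤ u s := by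
    intro s
    rcases le_or_gt ((3:ℝ)/4) |s| with h | h
    · rw [hu2 s h]
    · rw [abs_lt] at h
      exact (hu1 s (by linarith [h.1]) h.2).le
  have hle_iter : ∀ (m : ℕ) (y : ℝ), y ≤ (⇑u)^[m] y := by
    intro m
    induction m with
    | zero => intro y; simp
    | succ m ih =>
      intro y
      rw [Function.iterate_succ_apply']
      exact le_trans (ih y) (hle _)
  have husymm_le : ∀ s : ℝ, u.symm s ≤ s := by
    intro s
    have := hle (u.symm s)
    rwa [u.apply_symm_apply] at this
  have husymm_le_iter : ∀ (m : ℕ) (y : ℝ), (⇑u.symm)^[m] y ≤ y := by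
    intro m
    induction m with
    | zero => intro y; simp
    | succ m ih =>
      intro y
      rw [Function.iterate_succ_apply']
      exact le_trans (husymm_le _) (ih y)
  have husymm_mono : Monotone ⇑u.symm := by
    intro a b hab
    have h1 : u (u.symm a) ≤ u (u.symm b) := by
      rw [u.apply_symm_apply, u.apply_symm_apply]; exact hab
    exact (humono.le_iff_le).mp h1
  -- key inequality for backward iterates
  have hLI : Function.LeftInverse (⇑u.symm) ⇑u := u.symm_apply_apply
  have hback : (⇑u.symm)^[N] ((2:ℝ)/3) ≤ -(2:ℝ)/3 := by
    have h1 : (⇑u.symm)^[N] ((⇑u)^[N] (-(2:ℝ)/3)) = -(2:ℝ)/3 :=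
      (hLI.iterate N) (-(2:ℝ)/3)
    calc (⇑u.symm)^[N] ((2:ℝ)/3) ≤ (⇑u.symm)^[N] ((⇑u)^[N] (-(2:ℝ)/3)) :=
          (husymm_mono.iterate N) hN.le
      _ = -(2:ℝ)/3 := h1
  intro q₀ p₀ _hp₀ i
  -- formula for forward powers
  have happ : ∀ q p : ℝ, dissipMap H u (q, p) = (q + deriv H p, u p) := fun _ _ => rfl
  have happInv : ∀ q p : ℝ, (dissipMap H u)⁻¹ (q, p)
      = (q - deriv H (u.symm p), u.symm p) := fun _ _ => rfl
  have hpow : ∀ (n : ℕ) (q p : ℝ), ((dissipMap H u) ^ n) (q, p)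
      = (q + ∑ j ∈ Finset.range n, deriv H ((⇑u)^[j] p), (⇑u)^[n] p) := by
    intro n
    induction n with
    | zero => intro q p; simp
    | succ n ih =>
      intro q p
      have hstep : ((dissipMap H u) ^ (n+1)) (q, p)
          = ((dissipMap H u) ^ n) (dissipMap H u (q, p)) := by
        rw [pow_succ, Equiv.Perm.mul_apply]
      rw [hstep, happ, ih]
      refine Prod.ext ?_ ?_
      · simp only
        rw [Finset.sum_range_succ']
        have : ∀ j : ℕ, (⇑u)^[j] (u p) = (⇑u)^[j+1] p := by
          intro j; rw [Function.iterate_succ_apply]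
        simp only [this, Function.iterate_zero_apply]
        ring
      · simp only
        rw [← Function.iterate_succ_apply]
  have hpowInv : ∀ (n : ℕ) (q p : ℝ), (((dissipMap H u)⁻¹) ^ n) (q, p)
      = (q - ∑ j ∈ Finset.range n, deriv H ((⇑u.symm)^[j+1] p), (⇑u.symm)^[n] p) := by
    intro n
    induction n with
    | zero => intro q p; simp
    | succ n ih =>
      intro q p
      have hstep : (((dissipMap H u)⁻¹) ^ (n+1)) (q, p)
          = (((dissipMap H u)⁻¹) ^ n) ((dissipMap H u)⁻¹ (q, p)) := by
        rw [pow_succ, Equiv.Perm.mul_apply]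
      rw [hstep, happInv, ih]
      refine Prod.ext ?_ ?_
      · simp only
        rw [Finset.sum_range_succ']
        have key : ∀ x : ℕ, (⇑u.symm)^[x+1] (u.symm p) = (⇑u.symm)^[x+1+1] p :=
          fun x => (Function.iterate_succ_apply _ _ _).symm
        simp only [key, zero_add, Function.iterate_one]
        ring
      · simp only
        rw [← Function.iterate_succ_apply]
  rcases i with n | n
  · -- nonnegative powers
    have hz : (dissipMap H u : Equiv.Perm (ℝ × ℝ)) ^ (Int.ofNat n) = (dissipMap H u) ^ n := by
      rw [Int.ofNat_eq_coe, zpow_natCast]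
    rw [hz, hpow]
    simp only [add_sub_cancel_left]
    refine dissip_sumBound (fun j => deriv H ((⇑u)^[j] p₀)) γ hγ0 (fun j => hγ _) N ?_ n
    intro j k hjk hgj
    obtain ⟨m, rfl⟩ := Nat.exists_eq_add_of_le hjk
    have hxj : |(⇑u)^[j] p₀| ≤ 1/2 := by
      by_contra h
      exact hgj (hD _ (by push_neg at h; linarith))
    have hxj' : -(2:ℝ)/3 ≤ (⇑u)^[j] p₀ := by
      have := (abs_le.mp hxj).1
      linarith
    have hgt : (2:ℝ)/3 < (⇑u)^[N] ((⇑u)^[j] p₀) :=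
      lt_of_lt_of_le hN ((humono.monotone.iterate N) hxj')
    have harr : (⇑u)^[j + N + m] p₀ = (⇑u)^[m] ((⇑u)^[N] ((⇑u)^[j] p₀)) := by
      have h1 : j + N + m = m + (N + j) := by ring
      rw [h1, Function.iterate_add_apply, Function.iterate_add_apply]
    apply hD
    rw [harr]
    have : (⇑u)^[N] ((⇑u)^[j] p₀) ≤ (⇑u)^[m] ((⇑u)^[N] ((⇑u)^[j] p₀)) := hle_iter m _
    rw [abs_of_pos (by linarith)]
    linarith
  · -- negative powers
    have hz : (dissipMap H u : Equiv.Perm (ℝ × ℝ)) ^ (Int.negSucc n)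
        = ((dissipMap H u)⁻¹) ^ (n+1) := by
      rw [zpow_negSucc, inv_pow]
    rw [hz, hpowInv]
    simp only [sub_sub_cancel_left]
    rw [abs_neg]
    refine dissip_sumBound (fun j => deriv H ((⇑u.symm)^[j+1] p₀)) γ hγ0 (fun j => hγ _)
      N ?_ (n+1)
    intro j k hjk hgj
    obtain ⟨m, rfl⟩ := Nat.exists_eq_add_of_le hjk
    have hxj : |(⇑u.symm)^[j+1] p₀| ≤ 1/2 := by
      by_contra h
      exact hgj (hD _ (by push_neg at h; linarith))
    have hxj' : (⇑u.symm)^[j+1] p₀ ≤ (2:ℝ)/3 := by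
      have := (abs_le.mp hxj).2
      linarith
    have hlt : (⇑u.symm)^[N] ((⇑u.symm)^[j+1] p₀) ≤ -(2:ℝ)/3 :=
      le_trans ((husymm_mono.iterate N) hxj') hback
    have harr : (⇑u.symm)^[j + N + m + 1] p₀
        = (⇑u.symm)^[m] ((⇑u.symm)^[N] ((⇑u.symm)^[j+1] p₀)) := by
      have h1 : j + N + m + 1 = m + (N + (j + 1)) := by ring
      rw [h1, Function.iterate_add_apply, Function.iterate_add_apply]
    apply hD
    rw [harr]
    have : (⇑u.symm)^[m] ((⇑u.symm)^[N] ((⇑u.symm)^[j+1] p₀))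
        ≤ (⇑u.symm)^[N] ((⇑u.symm)^[j+1] p₀) := husymm_le_iter m _
    rw [abs_of_neg (by linarith)]
    linarith
end
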